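/- Let 4 < α < 5 and set w_k = (-1)^k binom(α,k) for k ≥ 1. Then w_1 = -α < 0, w_2 = Γ(α+1)/(2Γ(α-1)) > 0, w_3 = -Γ(α+1)/(6Γ(α-2)) < 0, w_4 = Γ(α+1)/(24Γ(α-3)) > 0, w_k < 0 for every integer k ≥ 5, and the sum of the negative weights equals W_- := w_1 + w_3 + Σ_{k=5}^∞ w_k = -1 - Γ(α+1)/(2Γ(α-1)) - Γ(α+1)/(24Γ(α-3)). -/

import Mathlib

open Real

noncomputable def genBinom (a : ℝ) (k : ℕ) : ℝ :=
  (∏ j ∈ Finset.range k, (a - (j : ℝ))) / (Nat.factorial k : ℝ)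

/-!
Pascal's rule telescopes the alternating partial sums, `∑_{k ≤ n} w_k = (-1)^n binom(α-1, n)`,
and `|binom(β, n)| * n` is nonincreasing once `n ≥ β ≥ 0`, so these partial sums tend to `0`.
Since `w_{k+1} = w_k (k - α)/(k + 1)`, every `w_k` with `k ≥ 5 > α` has the sign of `w_5 < 0`;
with only finitely many positive terms the series converges, `∑_k w_k = 0`, and therefore
`W_- = -(w_0 + w_2 + w_4)`. The Gamma forms come from `Γ(s + 1) = s Γ(s)`.
-/

open Filter Topology Finset

@[simp]
lemma genBinom_zero (a : ℝ) : genBinom a 0 = 1 := by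
  simp [genBinom]

lemma genBinom_succ (a : ℝ) (k : ℕ) :
    genBinom a (k + 1) = genBinom a k * (a - k) / (k + 1) := by
  simp only [genBinom, prod_range_succ, Nat.factorial_succ, Nat.cast_mul, Nat.cast_succ]
  field_simp

lemma genBinom_succ_eq_add_genBinom_sub_one (a : ℝ) (k : ℕ) :
    genBinom a (k + 1) = genBinom (a - 1) (k + 1) + genBinom (a - 1) k := by
  have hshift : ∏ j ∈ range (k + 1), (a - j) = a * ∏ j ∈ range k, (a - 1 - j) := by
    rw [prod_range_succ', mul_comm]
    push_cast
    congr 1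
    · simp
    · exact prod_congr rfl fun j _ => by ring
  simp only [genBinom, hshift, prod_range_succ, Nat.factorial_succ, Nat.cast_mul, Nat.cast_succ]
  field_simp
  ring

lemma neg_one_pow_mul_genBinom_succ (a : ℝ) (k : ℕ) :
    (-1) ^ (k + 1) * genBinom a (k + 1) = (-1) ^ k * genBinom a k * ((k - a) / (k + 1)) := by
  rw [genBinom_succ, pow_succ]
  ring

lemma sum_range_succ_neg_one_pow_mul_genBinom (a : ℝ) (n : ℕ) :
    ∑ k ∈ range (n + 1), (-1) ^ k * genBinom a k = (-1) ^ n * genBinom (a - 1) n := by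
  induction n with
  | zero => simp
  | succ n ih =>
    rw [sum_range_succ, ih, genBinom_succ_eq_add_genBinom_sub_one]
    ring

lemma neg_one_pow_mul_genBinom_neg_of_le {a : ℝ} {m : ℕ} (hm : a < m)
    (hneg : (-1) ^ m * genBinom a m < 0) {k : ℕ} (hk : m ≤ k) :
    (-1) ^ k * genBinom a k < 0 := by
  induction k, hk using Nat.le_induction with
  | base => exact hneg
  | succ k hmk ih =>
    have hka : 0 < (k : ℝ) - a := by
      have : (m : ℝ) ≤ k := by exact_mod_cast hmk
      linarith
    rw [neg_one_pow_mul_genBinom_succ]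
    exact mul_neg_of_neg_of_pos ih (by positivity)

lemma abs_genBinom_mul_le {b : ℝ} (hb : 0 ≤ b) {m : ℕ} (hm : b ≤ m) {n : ℕ} (hn : m ≤ n) :
    |genBinom b n| * n ≤ |genBinom b m| * m := by
  induction n, hn using Nat.le_induction with
  | base => rfl
  | succ n hmn ih =>
    have hnb : b ≤ n := hm.trans (by exact_mod_cast hmn)
    calc |genBinom b (n + 1)| * ↑(n + 1) = |genBinom b n| * (n - b) := by
          rw [genBinom_succ, abs_div, abs_mul, abs_sub_comm, abs_of_nonneg (sub_nonneg.2 hnb),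
            abs_of_pos (by positivity : (0 : ℝ) < n + 1)]
          push_cast
          field_simp
      _ ≤ |genBinom b n| * n := by gcongr; linarith
      _ ≤ |genBinom b m| * m := ih

lemma tendsto_genBinom_atTop_nhds_zero {b : ℝ} (hb : 0 ≤ b) :
    Tendsto (genBinom b) atTop (𝓝 0) := by
  set m := ⌈b⌉₊ + 1
  have hm : b ≤ m := (Nat.le_ceil b).trans (by simp [m])
  refine squeeze_zero_norm' ?_ (tendsto_const_div_atTop_nhds_zero_nat (|genBinom b m| * m))
  filter_upwards [eventually_ge_atTop m] with n hn
  have hn0 : (0 : ℝ) < n := by exact_mod_cast (Nat.succ_pos _).trans_le hn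
  rw [Real.norm_eq_abs, le_div_iff₀ hn0]
  exact abs_genBinom_mul_le hb hm hn

lemma tendsto_sum_range_neg_one_pow_mul_genBinom {a : ℝ} (ha : 1 ≤ a) :
    Tendsto (fun n => ∑ k ∈ range n, (-1) ^ k * genBinom a k) atTop (𝓝 0) := by
  rw [← tendsto_add_atTop_iff_nat 1, tendsto_zero_iff_norm_tendsto_zero]
  have hb : 0 ≤ a - 1 := by linarith
  simpa [sum_range_succ_neg_one_pow_mul_genBinom] using
    tendsto_zero_iff_norm_tendsto_zero.1 (tendsto_genBinom_atTop_nhds_zero hb)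

lemma hasSum_of_tendsto_sum_range_of_nonpos {f : ℕ → ℝ} {s : ℝ} {m : ℕ}
    (hf : ∀ k, m ≤ k → f k ≤ 0) (h : Tendsto (fun n => ∑ k ∈ range n, f k) atTop (𝓝 s)) :
    HasSum f s := by
  rw [← hasSum_nat_add_iff' m]
  have htail : Tendsto (fun n => ∑ k ∈ range n, -f (k + m)) atTop
      (𝓝 (-(s - ∑ k ∈ range m, f k))) := by
    refine (((tendsto_add_atTop_iff_nat m).2 h).sub_const _).neg.congr fun n => ?_
    rw [add_comm n m, sum_range_add, sum_neg_distrib]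
    simp [add_comm]
  simpa using ((hasSum_iff_tendsto_nat_of_nonneg
    (fun k => neg_nonneg.2 (hf _ (Nat.le_add_left m k))) _).2 htail).neg

lemma genBinom_eq_Gamma_div {a : ℝ} {k : ℕ} (h : 0 < a + 1 - k) :
    genBinom a k = Gamma (a + 1) / (k.factorial * Gamma (a + 1 - k)) := by
  induction k with
  | zero =>
    have : Gamma (a + 1) ≠ 0 := (Gamma_pos_of_pos (by simpa using h)).ne'
    simp [this]
  | succ k ih =>
    push_cast at h
    have hak : 0 < a - k := by linarith
    rw [genBinom_succ, ih (by linarith), show a + 1 - k = (a - k) + 1 by ring,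
      Gamma_add_one hak.ne', Nat.factorial_succ]
    push_cast
    rw [show a + 1 - (k + 1) = a - k by ring]
    have := Gamma_pos_of_pos hak
    field_simp

/-- For `4 < α < 5`, the GL weights satisfy `w_1 = -α < 0`,
`w_2 = Γ(α+1)/(2Γ(α-1)) > 0`, `w_3 = -Γ(α+1)/(6Γ(α-2)) < 0`,
`w_4 = Γ(α+1)/(24Γ(α-3)) > 0`, `w_k < 0` for `k ≥ 5`, and the sum of negative
weights is `W_- = w_1 + w_3 + Σ_{k≥5} w_k = -1 - Γ(α+1)/(2Γ(α-1)) - Γ(α+1)/(24Γ(α-3))`. -/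
theorem gl_weights_four_lt_alpha_lt_five (α : ℝ) (hα1 : 4 < α) (hα2 : α < 5) :
    ((-1 : ℝ) ^ 1 * genBinom α 1 = -α) ∧ (-α < 0) ∧
    ((-1 : ℝ) ^ 2 * genBinom α 2 = Real.Gamma (α + 1) / (2 * Real.Gamma (α - 1))) ∧
    (0 < Real.Gamma (α + 1) / (2 * Real.Gamma (α - 1))) ∧
    ((-1 : ℝ) ^ 3 * genBinom α 3 = -(Real.Gamma (α + 1) / (6 * Real.Gamma (α - 2)))) ∧
    (-(Real.Gamma (α + 1) / (6 * Real.Gamma (α - 2))) < 0) ∧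
    ((-1 : ℝ) ^ 4 * genBinom α 4 = Real.Gamma (α + 1) / (24 * Real.Gamma (α - 3))) ∧
    (0 < Real.Gamma (α + 1) / (24 * Real.Gamma (α - 3))) ∧
    (∀ k : ℕ, 5 ≤ k → (-1 : ℝ) ^ k * genBinom α k < 0) ∧
    Summable (fun k : ℕ => (-1 : ℝ) ^ (k + 5) * genBinom α (k + 5)) ∧
    ((-1 : ℝ) ^ 1 * genBinom α 1 + (-1 : ℝ) ^ 3 * genBinom α 3
        + ∑' k : ℕ, (-1 : ℝ) ^ (k + 5) * genBinom α (k + 5)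
      = -1 - Real.Gamma (α + 1) / (2 * Real.Gamma (α - 1))
          - Real.Gamma (α + 1) / (24 * Real.Gamma (α - 3))) := by
  have hΓ1 := Gamma_pos_of_pos (by linarith : 0 < α - 1)
  have hΓ2 := Gamma_pos_of_pos (by linarith : 0 < α - 2)
  have hΓ3 := Gamma_pos_of_pos (by linarith : 0 < α - 3)
  have hw2 : genBinom α 2 = Gamma (α + 1) / (2 * Gamma (α - 1)) := by
    rw [genBinom_eq_Gamma_div (by push_cast; linarith)]; norm_num; ring_nf
  have hw3 : genBinom α 3 = Gamma (α + 1) / (6 * Gamma (α - 2)) := by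
    rw [genBinom_eq_Gamma_div (by push_cast; linarith)]; norm_num; ring_nf
  have hw4 : genBinom α 4 = Gamma (α + 1) / (24 * Gamma (α - 3)) := by
    rw [genBinom_eq_Gamma_div (by push_cast; linarith)]; norm_num; ring_nf
  have hw5 : (-1) ^ 5 * genBinom α 5 < 0 := by
    norm_num [genBinom, prod_range_succ, Nat.factorial]
    apply_rules [mul_pos] <;> linarith
  have hneg : ∀ k, 5 ≤ k → (-1) ^ k * genBinom α k < 0 := fun k hk =>
    neg_one_pow_mul_genBinom_neg_of_le (by exact_mod_cast hα2) hw5 hk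
  have htail := (hasSum_nat_add_iff' 5).2 <| hasSum_of_tendsto_sum_range_of_nonpos
    (fun k hk => (hneg k hk).le) (tendsto_sum_range_neg_one_pow_mul_genBinom (by linarith))
  refine ⟨by simp [genBinom], by linarith, by simp [hw2], by positivity, by rw [hw3]; ring,
    by simp only [neg_lt_zero]; positivity, by rw [hw4]; ring, by positivity, hneg,
    htail.summable, ?_⟩
  rw [htail.tsum_eq]
  simp [sum_range_succ, hw2, hw4]
  ring
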